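/- arXiv:2205.07599 — 3 statements merged into one kernel-verified Lean document; each statement's English description precedes it below -/
import Mathlib

section
/- Let p > 1, γ > 0, 0 < α ≤ 1, 0 < β ≤ 1, and −1 < μ, ν < p−1. If p(γ−1) − (μ−ν) ≥ 0 (equivalently γ ≥ 1 + (μ−ν)/p), then the generalized multiplicative Hilbert operator H^{μ,ν}_{p,α,β,γ} is bounded on l^p. -/
/-!
The operator is dominated entrywise by a nonnegative matrix `K(m, n)`, and Schur's test with the
weight `(n log n) ^ (-1 / (p p'))` bounds `K` on `l^p`. The transpose of `K` has the same shape, so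
both Schur conditions reduce to one estimate, obtained by comparing the sum with an integral
after the substitution `s = log n`: with `M = (log m) ^ α`,
`∑ₙ (log n) ^ e (M + (log n) ^ β) ^ (-γ) / n ≤ ∫₀^∞ s ^ e (M + s ^ β) ^ (-γ) ds`,
which is `≲ M ^ ((e + 1) / β - γ)`.
The power of `log m` left over has exponent `α (1 + (μ - ν) / p - γ)`, which is nonpositive
exactly when `p (γ - 1) ≥ μ - ν`; it is then bounded by its value at `m = 2`.
-/

open scoped ENNReal

/-- The `l^p` norm of a sequence indexed from `n = 2` (entry `n` of the abstract
sequence corresponds to `a (n)`, and we sum over `n ≥ 2` via the shift `n + 2`). -/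
noncomputable def lpNorm (p : ℝ) (a : ℕ → ℂ) : ℝ≥0∞ :=
  (∑' n : ℕ, (‖a (n + 2)‖₊ : ℝ≥0∞) ^ p) ^ (1 / p)

/-- The generalized multiplicative Hilbert operator `H^{μ,ν}_{p,α,β,γ}`, where `q = p'`
is the conjugate exponent of `p`. -/
noncomputable def genH (p q α β γ μ ν : ℝ) (a : ℕ → ℂ) : ℕ → ℂ := fun m =>
  ((Real.log m ^ (((α - 1) + α * μ) / p) / (m : ℝ) ^ (1 / p) : ℝ) : ℂ) *
    ∑' n : ℕ,
      ((Real.log ((n : ℝ) + 2) ^ (((β - 1) - (q - 1) * β * ν) / q) /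
          (((n : ℝ) + 2) ^ (1 / q) *
            (Real.log m ^ α + Real.log ((n : ℝ) + 2) ^ β) ^ γ) : ℝ) : ℂ) *
        a (n + 2)

open Set Real

namespace ENNReal

variable {ι κ : Type*} {p q : ℝ}

theorem tsum_mul_le_Lp_mul_Lq (f g : ι → ℝ≥0∞) (hpq : p.HolderConjugate q) :
    ∑' i, f i * g i ≤ (∑' i, f i ^ p) ^ (1 / p) * (∑' i, g i ^ q) ^ (1 / q) := by
  have := hpq.pos
  have := hpq.symm.pos
  rw [ENNReal.tsum_eq_iSup_sum]
  refine iSup_le fun s => (inner_le_Lp_mul_Lq s f g hpq).trans ?_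
  gcongr <;> exact ENNReal.sum_le_tsum s

theorem rpow_tsum_mul_le_weighted (hpq : p.HolderConjugate q) (k g x : κ → ℝ≥0∞)
    (hg₀ : ∀ n, g n ≠ 0) (hg : ∀ n, g n ≠ ∞) :
    (∑' n, k n * x n) ^ p ≤
      (∑' n, k n * g n ^ q) ^ (p / q) * ∑' n, k n * (g n)⁻¹ ^ p * x n ^ p := by
  have hp := hpq.pos
  have hq := hpq.symm.pos
  have hsplit : ∀ n, k n * x n = (k n ^ (1 / q) * g n) * (k n ^ (1 / p) * ((g n)⁻¹ * x n)) := by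
    intro n
    calc k n * x n = (k n ^ (1 / q) * k n ^ (1 / p)) * ((g n * (g n)⁻¹) * x n) := by
          rw [← ENNReal.rpow_add_of_nonneg _ _ (by positivity) (by positivity), one_div, one_div,
            hpq.symm.inv_add_inv_eq_one, ENNReal.rpow_one,
            ENNReal.mul_inv_cancel (hg₀ n) (hg n), one_mul]
      _ = _ := by ring
  have hpow : ∀ (r : ℝ) (a b : ℝ≥0∞), 0 < r → (a ^ (1 / r) * b) ^ r = a * b ^ r := by
    intro r a b hr
    rw [ENNReal.mul_rpow_of_nonneg _ _ hr.le, ← ENNReal.rpow_mul, one_div_mul_cancel hr.ne',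
      ENNReal.rpow_one]
  have hHolder := tsum_mul_le_Lp_mul_Lq (fun n => k n ^ (1 / q) * g n)
    (fun n => k n ^ (1 / p) * ((g n)⁻¹ * x n)) hpq.symm
  simp only [hpow _ _ _ hq, hpow _ _ _ hp, ← hsplit] at hHolder
  calc (∑' n, k n * x n) ^ p
      ≤ ((∑' n, k n * g n ^ q) ^ (1 / q) * (∑' n, k n * ((g n)⁻¹ * x n) ^ p) ^ (1 / p)) ^ p := by
        gcongr
    _ = (∑' n, k n * g n ^ q) ^ (p / q) * ∑' n, k n * (g n)⁻¹ ^ p * x n ^ p := by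
        simp only [ENNReal.mul_rpow_of_nonneg _ _ hp.le, ← ENNReal.rpow_mul, mul_assoc]
        rw [one_div_mul_cancel hp.ne', ENNReal.rpow_one, one_div, inv_mul_eq_div]

theorem schur_test (hpq : p.HolderConjugate q) (K : ι → κ → ℝ≥0∞) (f : ι → ℝ≥0∞)
    (g : κ → ℝ≥0∞) (hg₀ : ∀ n, g n ≠ 0) (hg : ∀ n, g n ≠ ∞) {C₁ C₂ : ℝ≥0∞}
    (hrow : ∀ m, ∑' n, K m n * g n ^ q ≤ C₁ * f m ^ q)
    (hcol : ∀ n, ∑' m, K m n * f m ^ p ≤ C₂ * g n ^ p) (x : κ → ℝ≥0∞) :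
    ∑' m, (∑' n, K m n * x n) ^ p ≤ C₁ ^ (p - 1) * C₂ * ∑' n, x n ^ p := by
  have hp := hpq.pos
  have hq := hpq.symm.pos
  have hrow' : ∀ m, (∑' n, K m n * x n) ^ p ≤
      C₁ ^ (p - 1) * ∑' n, ((g n)⁻¹ ^ p * x n ^ p) * (K m n * f m ^ p) := by
    intro m
    calc (∑' n, K m n * x n) ^ p
        ≤ (C₁ * f m ^ q) ^ (p / q) * ∑' n, K m n * (g n)⁻¹ ^ p * x n ^ p := by
          refine (rpow_tsum_mul_le_weighted hpq _ g x hg₀ hg).trans ?_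
          gcongr
          exact hrow m
      _ = _ := by
          rw [ENNReal.mul_rpow_of_nonneg _ _ (by positivity),
            ← ENNReal.rpow_mul, mul_div_cancel₀ _ hpq.symm.ne_zero, hpq.div_conj_eq_sub_one,
            mul_assoc, ← ENNReal.tsum_mul_left]
          congr 1
          exact tsum_congr fun n => by ring
  calc ∑' m, (∑' n, K m n * x n) ^ p
      ≤ ∑' m, C₁ ^ (p - 1) * ∑' n, ((g n)⁻¹ ^ p * x n ^ p) * (K m n * f m ^ p) :=
        ENNReal.tsum_le_tsum hrow'
    _ = C₁ ^ (p - 1) * ∑' n, ((g n)⁻¹ ^ p * x n ^ p) * ∑' m, K m n * f m ^ p := by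
        rw [ENNReal.tsum_mul_left, ENNReal.tsum_comm]
        simp only [ENNReal.tsum_mul_left]
    _ ≤ C₁ ^ (p - 1) * ∑' n, ((g n)⁻¹ ^ p * x n ^ p) * (C₂ * g n ^ p) := by
        gcongr with n; exact hcol n
    _ = C₁ ^ (p - 1) * C₂ * ∑' n, x n ^ p := by
        rw [mul_assoc, ← ENNReal.tsum_mul_left (a := C₂)]
        refine congrArg _ (tsum_congr fun n => ?_)
        rw [mul_comm C₂, ← mul_assoc, mul_right_comm _ _ (g n ^ p),
          ← ENNReal.mul_rpow_of_nonneg _ _ hp.le, ENNReal.inv_mul_cancel (hg₀ n) (hg n),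
          ENNReal.one_rpow, one_mul, mul_comm]

end ENNReal

section Integral

open MeasureTheory

lemma inv_add_one_le_log_add_one_sub_log {x : ℝ} (hx : 0 < x) :
    (x + 1)⁻¹ ≤ log (x + 1) - log x := by
  have h := one_sub_inv_le_log_of_pos (div_pos (by linarith : 0 < x + 1) hx)
  rwa [log_div (by linarith) hx.ne', inv_div, one_sub_div (by linarith), add_sub_cancel_left,
    one_div] at h

-- Each term is at most the integral of `f` over `(log (n + 1), log (n + 2)]`, an interval of
-- length at least `1 / (n + 2)` on which `f ≥ f (log (n + 2))`.
lemma tsum_ofReal_comp_log_div_le_lintegral {f : ℝ → ℝ} (hf : AntitoneOn f (Ioi 0)) :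
    ∑' n : ℕ, ENNReal.ofReal (f (log (n + 2)) / (n + 2)) ≤
      ∫⁻ s in Ioi 0, ENNReal.ofReal (f s) := by
  set I : ℕ → Set ℝ := fun n => Ioc (log (n + 1)) (log (n + 2))
  have hI : ∀ n, I n ⊆ Ioi 0 := fun n s hs => (log_nonneg (by simp)).trans_lt hs.1
  have hdisj : Pairwise (Function.onFun Disjoint I) := by
    have hmono : Monotone fun n : ℕ => log (n + 1) := fun m n hmn =>
      log_le_log (by positivity) (by gcongr)
    convert hmono.pairwise_disjoint_on_Ioc_succ using 4 with n
    simp only [Order.succ_eq_add_one, Nat.cast_add, Nat.cast_one]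
    ring_nf
  have hterm : ∀ n : ℕ, ENNReal.ofReal (f (log (n + 2)) / (n + 2)) ≤
      ∫⁻ s in I n, ENNReal.ofReal (f s) := by
    intro n
    calc ENNReal.ofReal (f (log (n + 2)) / (n + 2))
        = ENNReal.ofReal (f (log (n + 2))) * ENNReal.ofReal (n + 1 + 1 : ℝ)⁻¹ := by
          rw [div_eq_mul_inv, ENNReal.ofReal_mul' (by positivity)]; ring_nf
      _ ≤ ENNReal.ofReal (f (log (n + 2))) * volume (I n) := by
          rw [Real.volume_Ioc]
          gcongr
          convert inv_add_one_le_log_add_one_sub_log (by positivity : (0 : ℝ) < n + 1) using 3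
          ring
      _ = ∫⁻ _ in I n, ENNReal.ofReal (f (log (n + 2))) := (setLIntegral_const _ _).symm
      _ ≤ ∫⁻ s in I n, ENNReal.ofReal (f s) := by
          refine setLIntegral_mono' measurableSet_Ioc fun s hs => ?_
          exact ENNReal.ofReal_le_ofReal (hf (hI n hs) (hI n ⟨hs.1.trans_le hs.2, le_rfl⟩) hs.2)
  calc ∑' n : ℕ, ENNReal.ofReal (f (log (n + 2)) / (n + 2))
      ≤ ∑' n : ℕ, ∫⁻ s in I n, ENNReal.ofReal (f s) := ENNReal.tsum_le_tsum hterm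
    _ = ∫⁻ s in ⋃ n, I n, ENNReal.ofReal (f s) :=
        (lintegral_iUnion (fun n => measurableSet_Ioc) hdisj _).symm
    _ ≤ ∫⁻ s in Ioi 0, ENNReal.ofReal (f s) := lintegral_mono_set (iUnion_subset hI)

lemma lintegral_Ioc_rpow {e T : ℝ} (he : -1 < e) (hT : 0 ≤ T) :
    ∫⁻ s in Ioc 0 T, ENNReal.ofReal (s ^ e) = ENNReal.ofReal (T ^ (e + 1) / (e + 1)) := by
  rw [← ofReal_integral_eq_lintegral_ofReal, ← intervalIntegral.integral_of_le hT,
    integral_rpow (Or.inl he), zero_rpow (by linarith), sub_zero]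
  · exact (intervalIntegrable_iff_integrableOn_Ioc_of_le hT).1
      (intervalIntegral.intervalIntegrable_rpow' he)
  · filter_upwards [ae_restrict_mem measurableSet_Ioc] with s hs
    exact rpow_nonneg hs.1.le e

lemma lintegral_Ioi_rpow {e T : ℝ} (he : e < -1) (hT : 0 < T) :
    ∫⁻ s in Ioi T, ENNReal.ofReal (s ^ e) = ENNReal.ofReal (-T ^ (e + 1) / (e + 1)) := by
  rw [← ofReal_integral_eq_lintegral_ofReal (integrableOn_Ioi_rpow_of_lt he hT),
    integral_Ioi_rpow_of_lt he hT]
  filter_upwards [ae_restrict_mem measurableSet_Ioi] with s hs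
  exact rpow_nonneg (hT.trans hs).le e

-- Split at `T = M ^ (1 / δ)`: below `T` use `M + s ^ δ ≥ M`, above it `M + s ^ δ ≥ s ^ δ`.
lemma lintegral_rpow_mul_add_rpow_neg_le {e δ γ M : ℝ} (he : -1 < e) (hδ : 0 < δ) (hM : 0 < M)
    (hconv : e + 1 < δ * γ) :
    ∫⁻ s in Ioi 0, ENNReal.ofReal (s ^ e * (M + s ^ δ) ^ (-γ)) ≤
      ENNReal.ofReal ((1 / (e + 1) + 1 / (δ * γ - (e + 1))) * M ^ ((e + 1) / δ - γ)) := by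
  have he₁ : 0 < e + 1 := by linarith
  have hγ : 0 < γ := pos_of_mul_pos_right (he₁.trans hconv) hδ.le
  set T := M ^ (1 / δ)
  have hT : 0 < T := rpow_pos_of_pos hM _
  have hTpow : ∀ r, T ^ r = M ^ (r / δ) := fun r => by
    rw [← rpow_mul hM.le, one_div_mul_eq_div]
  have hlow : ∫⁻ s in Ioc 0 T, ENNReal.ofReal (s ^ e * (M + s ^ δ) ^ (-γ)) ≤
      ENNReal.ofReal (1 / (e + 1) * M ^ ((e + 1) / δ - γ)) := by
    calc ∫⁻ s in Ioc 0 T, ENNReal.ofReal (s ^ e * (M + s ^ δ) ^ (-γ))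
        ≤ ∫⁻ s in Ioc 0 T, ENNReal.ofReal (M ^ (-γ)) * ENNReal.ofReal (s ^ e) := by
          refine setLIntegral_mono' measurableSet_Ioc fun s hs => ?_
          rw [← ENNReal.ofReal_mul (by positivity), mul_comm]
          refine ENNReal.ofReal_le_ofReal (mul_le_mul_of_nonneg_right ?_ (rpow_nonneg hs.1.le e))
          exact rpow_le_rpow_of_nonpos hM (by linarith [rpow_nonneg hs.1.le δ]) (by linarith)
      _ = ENNReal.ofReal (1 / (e + 1) * M ^ ((e + 1) / δ - γ)) := by
          rw [lintegral_const_mul _ (by fun_prop), lintegral_Ioc_rpow he hT.le,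
            ← ENNReal.ofReal_mul (by positivity), hTpow, sub_eq_neg_add, rpow_add hM]
          ring_nf
  have hhigh : ∫⁻ s in Ioi T, ENNReal.ofReal (s ^ e * (M + s ^ δ) ^ (-γ)) ≤
      ENNReal.ofReal (1 / (δ * γ - (e + 1)) * M ^ ((e + 1) / δ - γ)) := by
    calc ∫⁻ s in Ioi T, ENNReal.ofReal (s ^ e * (M + s ^ δ) ^ (-γ))
        ≤ ∫⁻ s in Ioi T, ENNReal.ofReal (s ^ (e - δ * γ)) := by
          refine setLIntegral_mono' measurableSet_Ioi fun s hs => ?_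
          have hs₀ : 0 < s := hT.trans hs
          rw [show e - δ * γ = e + δ * -γ by ring, rpow_add hs₀, rpow_mul hs₀.le]
          refine ENNReal.ofReal_le_ofReal (mul_le_mul_of_nonneg_left ?_ (rpow_nonneg hs₀.le e))
          exact rpow_le_rpow_of_nonpos (rpow_pos_of_pos hs₀ δ) (by linarith) (by linarith)
      _ = ENNReal.ofReal (1 / (δ * γ - (e + 1)) * M ^ ((e + 1) / δ - γ)) := by
          rw [lintegral_Ioi_rpow (by linarith) hT, hTpow,
            show (e - δ * γ + 1) / δ = (e + 1) / δ - γ by field_simp; ring,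
            show e - δ * γ + 1 = -(δ * γ - (e + 1)) by ring, div_neg, neg_div, neg_neg,
            div_eq_inv_mul, one_div]
  calc ∫⁻ s in Ioi 0, ENNReal.ofReal (s ^ e * (M + s ^ δ) ^ (-γ))
      = (∫⁻ s in Ioc 0 T, ENNReal.ofReal (s ^ e * (M + s ^ δ) ^ (-γ))) +
          ∫⁻ s in Ioi T, ENNReal.ofReal (s ^ e * (M + s ^ δ) ^ (-γ)) := by
        rw [← Ioc_union_Ioi_eq_Ioi hT.le, lintegral_union measurableSet_Ioi Ioc_disjoint_Ioi_same]
    _ ≤ _ := (add_le_add hlow hhigh).trans_eq <| by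
        rw [← ENNReal.ofReal_add (by positivity)
          (mul_nonneg (one_div_nonneg.2 (by linarith)) (by positivity)), ← add_mul]

lemma tsum_log_rpow_mul_add_rpow_neg_le {e δ γ M : ℝ} (he : -1 < e) (he₀ : e ≤ 0) (hδ : 0 < δ)
    (hM : 0 < M) (hconv : e + 1 < δ * γ) :
    ∑' n : ℕ, ENNReal.ofReal (log (n + 2) ^ e * (M + log (n + 2) ^ δ) ^ (-γ) / (n + 2)) ≤
      ENNReal.ofReal ((1 / (e + 1) + 1 / (δ * γ - (e + 1))) * M ^ ((e + 1) / δ - γ)) := by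
  have hγ : 0 < γ := pos_of_mul_pos_right ((by linarith : (0 : ℝ) < e + 1).trans hconv) hδ.le
  have hanti : AntitoneOn (fun s => s ^ e * (M + s ^ δ) ^ (-γ)) (Ioi 0) := by
    intro s (hs : 0 < s) t (ht : 0 < t) hst
    have hδst : s ^ δ ≤ t ^ δ := rpow_le_rpow hs.le hst hδ.le
    exact mul_le_mul (rpow_le_rpow_of_nonpos hs hst he₀)
      (rpow_le_rpow_of_nonpos (by positivity) (by linarith) (by linarith))
      (by positivity) (by positivity)
  exact (tsum_ofReal_comp_log_div_le_lintegral hanti).trans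
    (lintegral_rpow_mul_add_rpow_neg_le he hδ hM hconv)

end Integral

lemma rpow_div_mul_rpow_neg_eq {L N X B s r γ : ℝ} (hL : 0 < L) (hN : 0 < N) (hX : 0 < X)
    (hrs : r + s = 1) :
    L ^ B / (N ^ s * X ^ γ) * (L * N) ^ (-r) = L ^ (B - r) * X ^ (-γ) / N := by
  rw [mul_rpow hL.le hN.le, sub_eq_add_neg, rpow_add hL, rpow_neg hX.le, rpow_neg hN.le,
    rpow_neg hL.le]
  have hN' : N = N ^ s * N ^ r := by rw [← rpow_add hN, add_comm, hrs, rpow_one]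
  conv_rhs => rw [hN']
  field_simp

lemma rpow_div_rpow_mul_le {L l N A r α Y c : ℝ} (hl : 0 < l) (hlL : l ≤ L) (hN : 0 < N)
    (hc : 0 ≤ c) (hE : A + r + α * Y ≤ 0) :
    L ^ A / N ^ r * (c * (L ^ α) ^ Y) ≤ c * l ^ (A + r + α * Y) * (L * N) ^ (-r) := by
  have hL : 0 < L := hl.trans_le hlL
  have hsplit : L ^ A / N ^ r * (c * (L ^ α) ^ Y) =
      c * L ^ (A + r + α * Y) * (L * N) ^ (-r) := by
    rw [← rpow_mul hL.le, mul_rpow hL.le hN.le, rpow_neg hL.le, rpow_neg hN.le,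
      rpow_add hL, rpow_add hL]
    field_simp
  rw [hsplit]
  have hmono := rpow_le_rpow_of_nonpos hl hlL hE
  have : 0 ≤ (L * N) ^ (-r) := by positivity
  gcongr

/-- The entry `(m + 2, n + 2)` of the matrix of `genH`, with free exponents so that its
transpose is of the same form. -/
noncomputable def logKernel (A r α B s β γ : ℝ) (m n : ℕ) : ℝ :=
  log (m + 2) ^ A / ((m : ℝ) + 2) ^ r *
    (log (n + 2) ^ B / (((n : ℝ) + 2) ^ s * (log (m + 2) ^ α + log (n + 2) ^ β) ^ γ))

lemma logKernel_swap (A r α B s β γ : ℝ) (m n : ℕ) :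
    logKernel A r α B s β γ m n = logKernel B s β A r α γ n m := by
  simp only [logKernel, add_comm (log (m + 2 : ℝ) ^ α)]
  ring

noncomputable def logWeight (n : ℕ) : ℝ := log (n + 2) * (n + 2)

lemma log_nat_add_two_pos (n : ℕ) : 0 < log ((n : ℝ) + 2) :=
  log_pos (by linarith [n.cast_nonneg (α := ℝ)])

lemma logWeight_pos (n : ℕ) : 0 < logWeight n :=
  mul_pos (log_nat_add_two_pos n) (by positivity)

lemma ofReal_logWeight_rpow_rpow (n : ℕ) (ρ : ℝ) {t : ℝ} (ht : 0 ≤ t) :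
    ENNReal.ofReal (logWeight n ^ ρ) ^ t = ENNReal.ofReal (logWeight n ^ (ρ * t)) := by
  rw [ENNReal.ofReal_rpow_of_nonneg (rpow_nonneg (logWeight_pos n).le ρ) ht,
    ← rpow_mul (logWeight_pos n).le]

-- With these exponents the comparison integral leaves the factor `(log m) ^ (α (x + y - γ))`.
theorem exists_tsum_logKernel_mul_logWeight_le {A r α B s β γ x y : ℝ} (hrs : r + s = 1)
    (hA : A + r = α * x) (hB : B + s = β * y) (hα : 0 ≤ α) (hβ : 0 < β) (hβ₁ : β ≤ 1)
    (hx : 0 < x) (hy : 0 < y) (hy₁ : y ≤ 1) (hxy : x + y ≤ γ) :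
    ∃ C, 0 < C ∧ ∀ m, ∑' n, ENNReal.ofReal (logKernel A r α B s β γ m n) *
        ENNReal.ofReal (logWeight n ^ (-r)) ≤
      ENNReal.ofReal C * ENNReal.ofReal (logWeight m ^ (-r)) := by
  have he : B - r + 1 = β * y := by linarith
  have he₁ : 0 < B - r + 1 := he ▸ mul_pos hβ hy
  have he₀ : B - r ≤ 0 := by nlinarith [mul_le_one₀ hβ₁ hy.le hy₁]
  have hconv : B - r + 1 < β * γ := he ▸ mul_lt_mul_of_pos_left (by linarith) hβ
  have hY : (B - r + 1) / β - γ = y - γ := by rw [he, mul_div_cancel_left₀ _ hβ.ne']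
  have hE : A + r + α * (y - γ) ≤ 0 := by
    rw [hA, ← mul_add]; exact mul_nonpos_of_nonneg_of_nonpos hα (by linarith)
  set c := 1 / (B - r + 1) + 1 / (β * γ - (B - r + 1))
  have hc : 0 < c := add_pos (one_div_pos.2 (by linarith)) (one_div_pos.2 (by linarith))
  refine ⟨c * log 2 ^ (A + r + α * (y - γ)), by positivity, fun m => ?_⟩
  have hLm := log_nat_add_two_pos m
  have hterm : ∀ n, ENNReal.ofReal (logKernel A r α B s β γ m n) *
      ENNReal.ofReal (logWeight n ^ (-r)) =
      ENNReal.ofReal (log (m + 2) ^ A / ((m : ℝ) + 2) ^ r) * ENNReal.ofReal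
        (log (n + 2) ^ (B - r) * (log (m + 2) ^ α + log (n + 2) ^ β) ^ (-γ) / (n + 2)) := by
    intro n
    have hLn := log_nat_add_two_pos n
    rw [logKernel, logWeight, ← ENNReal.ofReal_mul (by positivity),
      ← ENNReal.ofReal_mul (by positivity), mul_assoc,
      rpow_div_mul_rpow_neg_eq hLn (by positivity) (by positivity) hrs]
  calc ∑' n, ENNReal.ofReal (logKernel A r α B s β γ m n) * ENNReal.ofReal (logWeight n ^ (-r))
      = ENNReal.ofReal (log (m + 2) ^ A / ((m : ℝ) + 2) ^ r) * ∑' n : ℕ, ENNReal.ofReal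
          (log (n + 2) ^ (B - r) * (log (m + 2) ^ α + log (n + 2) ^ β) ^ (-γ) / (n + 2)) := by
        simp only [hterm, ENNReal.tsum_mul_left]
    _ ≤ ENNReal.ofReal (log (m + 2) ^ A / ((m : ℝ) + 2) ^ r) *
          ENNReal.ofReal (c * (log (m + 2) ^ α) ^ ((B - r + 1) / β - γ)) := by
        gcongr
        exact tsum_log_rpow_mul_add_rpow_neg_le (by linarith) he₀ hβ (by positivity) hconv
    _ = ENNReal.ofReal
          (log (m + 2) ^ A / ((m : ℝ) + 2) ^ r * (c * (log (m + 2) ^ α) ^ (y - γ))) := by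
        rw [hY]; exact (ENNReal.ofReal_mul (by positivity)).symm
    _ ≤ ENNReal.ofReal (c * log 2 ^ (A + r + α * (y - γ)) * logWeight m ^ (-r)) :=
        ENNReal.ofReal_le_ofReal (rpow_div_rpow_mul_le (log_pos one_lt_two)
          (log_le_log two_pos (by simp)) (by positivity) hc.le hE)
    _ = _ := ENNReal.ofReal_mul (by positivity)

lemma enorm_genH_le (p q α β γ μ ν : ℝ) (a : ℕ → ℂ) (m : ℕ) :
    ‖genH p q α β γ μ ν a (m + 2)‖ₑ ≤ ∑' n, ENNReal.ofReal
      (logKernel (((α - 1) + α * μ) / p) (1 / p) α (((β - 1) - (q - 1) * β * ν) / q) (1 / q) β γ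
        m n) * ‖a (n + 2)‖ₑ := by
  have hLm := log_nat_add_two_pos m
  have henorm : ∀ t : ℝ, 0 ≤ t → ‖(t : ℂ)‖ₑ = ENNReal.ofReal t := fun t ht => by
    rw [← ofReal_norm, Complex.norm_real, norm_of_nonneg ht]
  rw [genH, enorm_mul, Nat.cast_add, Nat.cast_two, henorm _ (by positivity)]
  refine (mul_le_mul_right enorm_tsum_le_tsum_enorm _).trans_eq ?_
  rw [← ENNReal.tsum_mul_left]
  refine tsum_congr fun n => ?_
  have hLn := log_nat_add_two_pos n
  rw [enorm_mul, henorm _ (by positivity), ← mul_assoc, ← ENNReal.ofReal_mul (by positivity)]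
  rfl

theorem exists_tsum_tsum_logKernel_rpow_le {p q A α B β γ x y : ℝ} (hpq : p.HolderConjugate q)
    (hA : A + 1 / p = α * x) (hB : B + 1 / q = β * y) (hα : 0 < α) (hα₁ : α ≤ 1) (hβ : 0 < β)
    (hβ₁ : β ≤ 1) (hx : 0 < x) (hx₁ : x ≤ 1) (hy : 0 < y) (hy₁ : y ≤ 1) (hxy : x + y ≤ γ) :
    ∃ C, 0 < C ∧ ∀ f : ℕ → ℝ≥0∞,
      ∑' m, (∑' n, ENNReal.ofReal (logKernel A (1 / p) α B (1 / q) β γ m n) * f n) ^ p ≤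
        ENNReal.ofReal C * ∑' n, f n ^ p := by
  have hp := hpq.pos
  have hq := hpq.symm.pos
  have hpq' : 1 / p + 1 / q = 1 := by simpa only [one_div] using hpq.inv_add_inv_eq_one
  obtain ⟨C₁, hC₁, hrow⟩ :=
    exists_tsum_logKernel_mul_logWeight_le hpq' hA hB hα.le hβ hβ₁ hx hy hy₁ hxy
  obtain ⟨C₂, hC₂, hcol⟩ := exists_tsum_logKernel_mul_logWeight_le ((add_comm _ _).trans hpq')
    hB hA hβ.le hα hα₁ hy hx hx₁ ((add_comm _ _).trans_le hxy)
  set h : ℕ → ℝ≥0∞ := fun n => ENNReal.ofReal (logWeight n ^ (-(1 / (p * q))))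
  have hhq : ∀ n, h n ^ q = ENNReal.ofReal (logWeight n ^ (-(1 / p))) := fun n => by
    rw [ofReal_logWeight_rpow_rpow _ _ hq.le]; field_simp
  have hhp : ∀ n, h n ^ p = ENNReal.ofReal (logWeight n ^ (-(1 / q))) := fun n => by
    rw [ofReal_logWeight_rpow_rpow _ _ hp.le]; field_simp
  refine ⟨C₁ ^ (p - 1) * C₂, by positivity, fun f => ?_⟩
  rw [ENNReal.ofReal_mul (by positivity), ← ENNReal.ofReal_rpow_of_pos hC₁]
  exact ENNReal.schur_test hpq _ h h
    (fun n => (ENNReal.ofReal_pos.2 (rpow_pos_of_pos (logWeight_pos n) _)).ne')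
    (fun n => ENNReal.ofReal_ne_top) (fun m => by simpa only [hhq] using hrow m)
    (fun n => by simpa only [hhp, logKernel_swap _ _ β] using hcol n) f

theorem generalized_multiplicative_hilbert_bounded_of_nonneg_general
    (p q α β γ μ ν : ℝ) (hp : 1 < p) (hq : 1 / p + 1 / q = 1)
    (hα0 : 0 < α) (hα1 : α ≤ 1) (hβ0 : 0 < β) (hβ1 : β ≤ 1)
    (hμ1 : -1 < μ) (hμ2 : μ < p - 1) (hν1 : -1 < ν) (hν2 : ν < p - 1)
    (hcond : 0 ≤ p * (γ - 1) - (μ - ν)) :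
    ∃ C : ℝ, 0 < C ∧ ∀ a : ℕ → ℂ, lpNorm p a ≠ ⊤ →
      lpNorm p (genH p q α β γ μ ν a) ≤ ENNReal.ofReal C * lpNorm p a := by
  have hpq : p.HolderConjugate q := by
    rw [Real.holderConjugate_iff, ← one_div, ← one_div]; exact ⟨hp, hq⟩
  have hp₀ : 0 < p := hpq.pos
  have hA : ((α - 1) + α * μ) / p + 1 / p = α * ((1 + μ) / p) := by ring
  have hB : ((β - 1) - (q - 1) * β * ν) / q + 1 / q = β * ((p - 1 - ν) / p) := by
    have hq₀ : q ≠ 0 := hpq.symm.ne_zero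
    field_simp
    linear_combination (-(β * ν) - β) * hpq.sub_one_mul_conj
  obtain ⟨C, hC, hK⟩ := exists_tsum_tsum_logKernel_rpow_le (γ := γ) hpq hA hB hα0 hα1 hβ0 hβ1
    (div_pos (by linarith) hp₀) ((div_le_one hp₀).2 (by linarith))
    (div_pos (by linarith) hp₀) ((div_le_one hp₀).2 (by linarith))
    (by rw [← add_div, div_le_iff₀ hp₀]; linarith)
  refine ⟨C ^ (1 / p), by positivity, fun a _ => ?_⟩
  calc lpNorm p (genH p q α β γ μ ν a)
      ≤ (∑' m, (∑' n, ENNReal.ofReal (logKernel (((α - 1) + α * μ) / p) (1 / p) α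
          (((β - 1) - (q - 1) * β * ν) / q) (1 / q) β γ m n) * ‖a (n + 2)‖ₑ) ^ p) ^ (1 / p) := by
        unfold lpNorm
        gcongr with m
        exact enorm_genH_le p q α β γ μ ν a m
    _ ≤ (ENNReal.ofReal C * ∑' n, ‖a (n + 2)‖ₑ ^ p) ^ (1 / p) := by gcongr; exact hK _
    _ = ENNReal.ofReal (C ^ (1 / p)) * lpNorm p a := by
        rw [ENNReal.mul_rpow_of_nonneg _ _ (by positivity), ENNReal.ofReal_rpow_of_pos hC]
        rfl

/-- If `p(γ−1) − (μ−ν) ≥ 0` (equivalently `γ ≥ 1 + (μ−ν)/p`), then the generalized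
multiplicative Hilbert operator `H^{μ,ν}_{p,α,β,γ}` is bounded on `l^p`. -/
theorem generalized_multiplicative_hilbert_bounded_of_nonneg
    (p q α β γ μ ν : ℝ) (hp : 1 < p) (hq : 1 / p + 1 / q = 1)
    (hγ : 0 < γ) (hα0 : 0 < α) (hα1 : α ≤ 1) (hβ0 : 0 < β) (hβ1 : β ≤ 1)
    (hμ1 : -1 < μ) (hμ2 : μ < p - 1) (hν1 : -1 < ν) (hν2 : ν < p - 1)
    (hcond : 0 ≤ p * (γ - 1) - (μ - ν)) :
    ∃ C : ℝ, 0 < C ∧ ∀ a : ℕ → ℂ, lpNorm p a ≠ ⊤ →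
      lpNorm p (genH p q α β γ μ ν a) ≤ ENNReal.ofReal C * lpNorm p a :=
  generalized_multiplicative_hilbert_bounded_of_nonneg_general p q α β γ μ ν hp hq hα0 hα1 hβ0 hβ1
    hμ1 hμ2 hν1 hν2 hcond
end

section
/- Let p > 1, 0 < α ≤ 1, 0 < β ≤ 1, and −1 < μ, ν < p−1. For every integer m ≥ 2, Σ_{n=2}^∞ [ (log n)^{β−1} / ( n · ((log m)^α + (log n)^β)^{1+(μ−ν)/p} ) ] · (log m)^{α(1+μ)/p} / (log n)^{β(1+ν)/p} ≤ (1/β) · B((1+μ)/p, (p−1−ν)/p), where B denotes the Beta function and p' is the conjugate exponent of p. -/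
open scoped ENNReal

/-- The Beta function `B(u, v) = ∫_0^∞ t^{u-1} / (1+t)^{u+v} dt`. -/
noncomputable def betaFn (u v : ℝ) : ℝ :=
  ∫ t in Set.Ioi (0 : ℝ), t ^ (u - 1) / (1 + t) ^ (u + v)

/-!
With `u = (1+μ)/p`, `v = (p-1-ν)/p` and `L = (log m)^α`, the `n`-th summand is `k(log n) / n`
for the kernel `k = eKernel β u v L`, which is decreasing on `(0, ∞)`. Hence the sum is at most
`∫_1^∞ k(log x) / x dx = ∫_0^∞ k(y) dy`, and the substitution `s = L y^{-β}` turns this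
integral into `(1/β) ∫_0^∞ s^{u-1} (1+s)^{-(u+v)} ds = (1/β) B(u, v)`.
-/

open MeasureTheory Set Real

theorem tsum_le_setLIntegral_Ioi_of_antitoneOn {f : ℝ → ℝ≥0∞} {a : ℝ}
    (hf : AntitoneOn f (Ioi a)) :
    ∑' n : ℕ, f (a + n + 1) ≤ ∫⁻ x in Ioi a, f x := by
  have hdisj : Pairwise (Function.onFun Disjoint fun n : ℕ => Ioc (a + n) (a + n + 1)) := by
    intro i j hij
    simpa using pairwise_disjoint_Ioc_add_intCast a (Nat.cast_injective.ne hij : (i : ℤ) ≠ j)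
  calc ∑' n : ℕ, f (a + n + 1)
      ≤ ∑' n : ℕ, ∫⁻ x in Ioc (a + n) (a + n + 1), f x := by
        refine ENNReal.tsum_le_tsum fun n => ?_
        calc f (a + n + 1) = ∫⁻ _ in Ioc (a + n) (a + n + 1), f (a + n + 1) := by simp
          _ ≤ _ := setLIntegral_mono' measurableSet_Ioc fun x hx =>
              hf (lt_of_le_of_lt (by simp) hx.1) (by simp; linarith) hx.2
    _ = ∫⁻ x in ⋃ n : ℕ, Ioc (a + n) (a + n + 1), f x :=
        (lintegral_iUnion (fun _ => measurableSet_Ioc) hdisj f).symm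
    _ ≤ ∫⁻ x in Ioi a, f x :=
        lintegral_mono_set <| iUnion_subset fun n x hx =>
          lt_of_le_of_lt (by simp) hx.1

theorem lintegral_comp_exp_Ioi (g : ℝ → ℝ≥0∞) :
    ∫⁻ y in Ioi 0, ENNReal.ofReal (exp y) * g (exp y) = ∫⁻ x in Ioi 1, g x := by
  rw [← exp_zero, ← image_exp_Ioi, lintegral_image_eq_lintegral_abs_deriv_mul
    measurableSet_Ioi (fun y _ => (hasDerivAt_exp y).hasDerivWithinAt) exp_injective.injOn]
  simp_rw [abs_of_pos (exp_pos _)]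

theorem lintegral_comp_const_mul_rpow_Ioi {c p : ℝ} (hc : 0 < c) (hp : p ≠ 0)
    (g : ℝ → ℝ≥0∞) :
    ∫⁻ y in Ioi 0, ENNReal.ofReal (c * |p| * y ^ (p - 1)) * g (c * y ^ p) =
      ∫⁻ x in Ioi 0, g x := by
  have himage : (fun y => c * y ^ p) '' Ioi 0 = Ioi 0 := by
    refine Subset.antisymm (image_subset_iff.2 fun y (hy : 0 < y) => by
      simp only [mem_preimage, mem_Ioi]; positivity) fun x (hx : 0 < x) => ?_
    refine ⟨(x / c) ^ p⁻¹, by simp only [mem_Ioi]; positivity, ?_⟩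
    simp only
    rw [← rpow_mul (by positivity), inv_mul_cancel₀ hp, rpow_one]
    field_simp
  have hderiv : ∀ y ∈ Ioi (0 : ℝ),
      HasDerivWithinAt (fun y => c * y ^ p) (c * (p * y ^ (p - 1))) (Ioi 0) y := fun y hy =>
    ((hasDerivAt_rpow_const (Or.inl (ne_of_gt hy))).const_mul c).hasDerivWithinAt
  have hinj : InjOn (fun y => c * y ^ p) (Ioi 0) := fun y (hy : 0 < y) z (hz : 0 < z) h =>
    rpow_left_injOn hp hy.le hz.le (mul_left_cancel₀ hc.ne' h)
  conv_rhs =>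
    rw [← himage, lintegral_image_eq_lintegral_abs_deriv_mul measurableSet_Ioi hderiv hinj]
  refine setLIntegral_congr_fun measurableSet_Ioi fun y hy => ?_
  rw [abs_mul, abs_mul, abs_of_pos hc, abs_of_pos (rpow_pos_of_pos hy _), mul_assoc]

theorem integrableOn_rpow_div_one_add_rpow_Ioi {u v : ℝ} (hu : 0 < u) (hv : 0 < v) :
    IntegrableOn (fun t : ℝ => t ^ (u - 1) / (1 + t) ^ (u + v)) (Ioi 0) := by
  have hmeas : AEStronglyMeasurable (fun t : ℝ => t ^ (u - 1) / (1 + t) ^ (u + v)) :=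
    Measurable.aestronglyMeasurable (by measurability)
  rw [← Ioc_union_Ioi_eq_Ioi zero_le_one]
  refine IntegrableOn.union ?_ ?_
  · refine (intervalIntegral.intervalIntegrable_rpow' (r := u - 1) (by linarith)).1.mono'
      hmeas.restrict (ae_restrict_of_forall_mem measurableSet_Ioc fun t ht => ?_)
    have ht : 0 < t := ht.1
    rw [norm_of_nonneg (by positivity)]
    exact div_le_self (by positivity) (one_le_rpow (by linarith) (by linarith))
  · refine (integrableOn_Ioi_rpow_of_lt (a := -1 - v) (by linarith) zero_lt_one).mono'
      hmeas.restrict (ae_restrict_of_forall_mem measurableSet_Ioi fun t (ht : 1 < t) => ?_)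
    have ht : 0 < t := zero_lt_one.trans ht
    rw [norm_of_nonneg (by positivity)]
    calc t ^ (u - 1) / (1 + t) ^ (u + v) ≤ t ^ (u - 1) / t ^ (u + v) := by
          gcongr; linarith
      _ = t ^ (-1 - v) := by rw [← rpow_sub ht]; ring_nf

theorem lintegral_ofReal_eq_betaFn {u v : ℝ} (hu : 0 < u) (hv : 0 < v) :
    ∫⁻ t in Ioi 0, ENNReal.ofReal (t ^ (u - 1) / (1 + t) ^ (u + v)) =
      ENNReal.ofReal (betaFn u v) :=
  (ofReal_integral_eq_lintegral_ofReal (integrableOn_rpow_div_one_add_rpow_Ioi hu hv)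
    (ae_restrict_of_forall_mem measurableSet_Ioi fun t (ht : 0 < t) => by positivity)).symm

noncomputable def eKernel (β u v L y : ℝ) : ℝ :=
  y ^ (β - 1) / (L + y ^ β) ^ (u + v) * (L ^ u / y ^ (β * (1 - v)))

section eKernel

variable {β u v L : ℝ}

theorem eKernel_antitoneOn (hβ0 : 0 < β) (hβ1 : β ≤ 1) (huv : 0 ≤ u + v) (hv : v ≤ 1)
    (hL : 0 ≤ L) : AntitoneOn (eKernel β u v L) (Ioi 0) := by
  intro x (hx : 0 < x) y (hy : 0 < y) hxy
  unfold eKernel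
  gcongr ?_ / ?_ * (_ / ?_)
  · exact rpow_le_rpow_of_nonpos hx hxy (by linarith)
  · gcongr
  · exact rpow_le_rpow hx.le hxy (mul_nonneg hβ0.le (by linarith))

theorem eKernel_eq_mul_betaIntegrand (hβ0 : 0 < β) (hL : 0 < L) {y : ℝ} (hy : 0 < y) :
    eKernel β u v L y = β⁻¹ * (L * β * y ^ (-β - 1) *
      ((L * y ^ (-β)) ^ (u - 1) / (1 + L * y ^ (-β)) ^ (u + v))) := by
  have hsum : 1 + L * y ^ (-β) = (L + y ^ β) * y ^ (-β) := by
    rw [add_mul, rpow_neg hy.le, mul_inv_cancel₀ (rpow_pos_of_pos hy β).ne']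
    ring
  rw [hsum]
  unfold eKernel
  -- every factor is a positive real power, so it suffices to compare logarithms
  refine log_injOn_pos (mem_Ioi.2 (by positivity)) (mem_Ioi.2 (by positivity)) ?_
  simp (disch := positivity) only [log_mul, log_div, log_inv, log_rpow]
  ring

theorem lintegral_eKernel (hβ0 : 0 < β) (hL : 0 < L) (hu : 0 < u) (hv : 0 < v) :
    ∫⁻ y in Ioi 0, ENNReal.ofReal (eKernel β u v L y) =
      ENNReal.ofReal (1 / β * betaFn u v) := by
  have hsubst := lintegral_comp_const_mul_rpow_Ioi hL (neg_ne_zero.2 hβ0.ne')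
    fun s => ENNReal.ofReal (s ^ (u - 1) / (1 + s) ^ (u + v))
  rw [abs_neg, abs_of_pos hβ0, lintegral_ofReal_eq_betaFn hu hv] at hsubst
  calc ∫⁻ y in Ioi 0, ENNReal.ofReal (eKernel β u v L y)
      = ∫⁻ y in Ioi 0, ENNReal.ofReal β⁻¹ * (ENNReal.ofReal (L * β * y ^ (-β - 1)) *
          ENNReal.ofReal ((L * y ^ (-β)) ^ (u - 1) / (1 + L * y ^ (-β)) ^ (u + v))) := by
        refine setLIntegral_congr_fun measurableSet_Ioi fun y (hy : 0 < y) => ?_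
        rw [eKernel_eq_mul_betaIntegrand hβ0 hL hy, ENNReal.ofReal_mul (by positivity),
          ENNReal.ofReal_mul (by positivity)]
    _ = ENNReal.ofReal (1 / β * betaFn u v) := by
        rw [lintegral_const_mul' _ _ ENNReal.ofReal_ne_top, hsubst,
          ← ENNReal.ofReal_mul (by positivity), one_div]

theorem eKernel_comp_log_div_antitoneOn (hβ0 : 0 < β) (hβ1 : β ≤ 1) (huv : 0 ≤ u + v)
    (hv : v ≤ 1) (hL : 0 ≤ L) : AntitoneOn (fun x => eKernel β u v L (log x) / x) (Ioi 1) := by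
  intro x (hx : 1 < x) y (hy : 1 < y) hxy
  have hnonneg : 0 ≤ eKernel β u v L (log x) := by
    have := log_pos hx
    unfold eKernel; positivity
  exact div_le_div₀ hnonneg (eKernel_antitoneOn hβ0 hβ1 huv hv hL (log_pos hx) (log_pos hy)
    (log_le_log (by linarith) hxy)) (by linarith) hxy

theorem lintegral_eKernel_comp_log_div (hβ0 : 0 < β) (hL : 0 < L) (hu : 0 < u) (hv : 0 < v) :
    ∫⁻ x in Ioi 1, ENNReal.ofReal (eKernel β u v L (log x) / x) =
      ENNReal.ofReal (1 / β * betaFn u v) := by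
  rw [← lintegral_comp_exp_Ioi, ← lintegral_eKernel hβ0 hL hu hv]
  refine setLIntegral_congr_fun measurableSet_Ioi fun y _ => ?_
  rw [← ENNReal.ofReal_mul (exp_pos y).le, log_exp, mul_div_cancel₀ _ (exp_pos y).ne']

end eKernel

theorem lemma_E_bound_general
    (p α β μ ν : ℝ) (hp : 1 < p)
    (hβ0 : 0 < β) (hβ1 : β ≤ 1)
    (hμ1 : -1 < μ) (hν1 : -1 < ν) (hν2 : ν < p - 1)
    (m : ℕ) (hm : 2 ≤ m) :
    ∑' n : ℕ,
        ENNReal.ofReal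
          (Real.log ((n : ℝ) + 2) ^ (β - 1) /
              (((n : ℝ) + 2) *
                (Real.log m ^ α + Real.log ((n : ℝ) + 2) ^ β) ^ (1 + (μ - ν) / p)) *
            (Real.log m ^ (α * (1 + μ) / p) / Real.log ((n : ℝ) + 2) ^ (β * (1 + ν) / p)))
      ≤ ENNReal.ofReal ((1 / β) * betaFn ((1 + μ) / p) ((p - 1 - ν) / p)) := by
  have hp0 : 0 < p := by linarith
  have hlogm : 0 < log m := log_pos (by exact_mod_cast hm)
  have hL : 0 < log m ^ α := rpow_pos_of_pos hlogm α
  have hu : 0 < (1 + μ) / p := div_pos (by linarith) hp0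
  have hv : 0 < (p - 1 - ν) / p := div_pos (by linarith) hp0
  have hv1 : (p - 1 - ν) / p ≤ 1 := (div_le_one hp0).2 (by linarith)
  calc _ = ∑' n : ℕ, ENNReal.ofReal (eKernel β ((1 + μ) / p) ((p - 1 - ν) / p) (log m ^ α)
          (log (1 + n + 1)) / (1 + n + 1)) := by
        refine tsum_congr fun n => ?_
        rw [show 1 + (μ - ν) / p = (1 + μ) / p + (p - 1 - ν) / p by field_simp; ring,
          show α * (1 + μ) / p = α * ((1 + μ) / p) by ring, rpow_mul hlogm.le,
          show β * (1 + ν) / p = β * (1 - (p - 1 - ν) / p) by field_simp; ring,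
          show (1 : ℝ) + n + 1 = n + 2 by ring, eKernel]
        rw [div_mul_eq_div_div_swap, div_mul_eq_mul_div]
    _ ≤ ∫⁻ x in Ioi 1, ENNReal.ofReal (eKernel β ((1 + μ) / p) ((p - 1 - ν) / p) (log m ^ α)
          (log x) / x) :=
        tsum_le_setLIntegral_Ioi_of_antitoneOn fun x hx y hy hxy =>
          ENNReal.ofReal_le_ofReal <|
            eKernel_comp_log_div_antitoneOn hβ0 hβ1 (add_pos hu hv).le hv1 hL.le hx hy hxy
    _ = _ := lintegral_eKernel_comp_log_div hβ0 hL hu hv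

/-- **(Lemma 2.1, first bound.)** For every integer `m ≥ 2`,
`E(m) = ∑_{n≥2} (log n)^{β−1} / (n ((log m)^α + (log n)^β)^{1+(μ−ν)/p}) ·
(log m)^{α(1+μ)/p} / (log n)^{β(1+ν)/p} ≤ (1/β) B((1+μ)/p, (p−1−ν)/p)`.
(The sum is taken in `ℝ≥0∞`, so convergence is part of the claim.) -/
theorem lemma_E_bound
    (p q α β μ ν : ℝ) (hp : 1 < p) (hq : 1 / p + 1 / q = 1)
    (hα0 : 0 < α) (hα1 : α ≤ 1) (hβ0 : 0 < β) (hβ1 : β ≤ 1)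
    (hμ1 : -1 < μ) (hμ2 : μ < p - 1) (hν1 : -1 < ν) (hν2 : ν < p - 1)
    (m : ℕ) (hm : 2 ≤ m) :
    ∑' n : ℕ,
        ENNReal.ofReal
          (Real.log ((n : ℝ) + 2) ^ (β - 1) /
              (((n : ℝ) + 2) *
                (Real.log m ^ α + Real.log ((n : ℝ) + 2) ^ β) ^ (1 + (μ - ν) / p)) *
            (Real.log m ^ (α * (1 + μ) / p) / Real.log ((n : ℝ) + 2) ^ (β * (1 + ν) / p)))
      ≤ ENNReal.ofReal ((1 / β) * betaFn ((1 + μ) / p) ((p - 1 - ν) / p)) :=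
  lemma_E_bound_general p α β μ ν hp hβ0 hβ1 hμ1 hν1 hν2 m hm
end

section
/- Let 0 < α ≤ 1. Then ε · Σ_{m=2}^∞ (log m)^{−1−αε} / m tends to 1/α as ε → 0⁺. -/
open scoped Topology

open Real MeasureTheory Filter Set

/-! Since `-(log (x + a)) ^ (-s) / s` is an antiderivative of
`f x = log (x + a) ^ (-(1 + s)) / (x + a)`, we have `∫_0^∞ f = (log a) ^ (-s) / s`. By the integral
test the sum `∑ f m` lies between this integral and `f 0` plus it, so `s ∑ f m → 1` as `s → 0⁺`; the theorem is the case `a = 2` after the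
substitution `s = α ε`. -/

section LogRpowSum

variable {s a : ℝ}

lemma hasDerivAt_neg_log_add_rpow_div (hs : s ≠ 0) {x : ℝ} (hx : 1 < x + a) :
    HasDerivAt (fun y => -log (y + a) ^ (-s) / s) (log (x + a) ^ (-(1 + s)) / (x + a)) x := by
  have hlog : 0 < log (x + a) := log_pos hx
  have h : HasDerivAt (fun y => -log (y + a) ^ (-s) / s)
      (-((x + a)⁻¹ * -s * log (x + a) ^ (-s - 1)) / s) x :=
    (((hasDerivAt_log (by linarith)).comp_add_const x a).rpow_const
      (Or.inl hlog.ne')).neg.div_const s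
  refine h.congr_deriv ?_
  rw [show -(1 + s) = -s - 1 by ring]
  field_simp

lemma log_add_rpow_div_nonneg {x : ℝ} (hx : 1 ≤ x + a) :
    0 ≤ log (x + a) ^ (-(1 + s)) / (x + a) := by
  have := log_nonneg hx
  positivity

lemma antitoneOn_log_add_rpow_div (hs : 0 ≤ s) (ha : 1 < a) :
    AntitoneOn (fun x => log (x + a) ^ (-(1 + s)) / (x + a)) (Ici 0) := by
  intro x hx y _ hxy
  have hlog : 0 < log (x + a) := log_pos (by linarith [mem_Ici.1 hx])
  have hpow : log (y + a) ^ (-(1 + s)) ≤ log (x + a) ^ (-(1 + s)) :=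
    rpow_le_rpow_of_nonpos hlog (log_le_log (by linarith [mem_Ici.1 hx]) (by linarith))
      (by linarith)
  exact div_le_div₀ (rpow_nonneg hlog.le _) hpow (by linarith [mem_Ici.1 hx]) (by linarith)

lemma tendsto_neg_log_add_rpow_div_atTop (hs : 0 < s) :
    Tendsto (fun y => -log (y + a) ^ (-s) / s) atTop (𝓝 0) := by
  simpa using ((tendsto_rpow_neg_atTop hs).comp
    (tendsto_log_atTop.comp (tendsto_atTop_add_const_right _ a tendsto_id))).neg.div_const s

lemma integrableOn_log_add_rpow_div (hs : 0 < s) (ha : 1 < a) :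
    IntegrableOn (fun x => log (x + a) ^ (-(1 + s)) / (x + a)) (Ioi 0) :=
  integrableOn_Ioi_deriv_of_nonneg'
    (fun x hx => hasDerivAt_neg_log_add_rpow_div hs.ne' (by linarith [mem_Ici.1 hx]))
    (fun x hx => log_add_rpow_div_nonneg (by linarith [mem_Ioi.1 hx]))
    (tendsto_neg_log_add_rpow_div_atTop hs)

lemma integral_log_add_rpow_div (hs : 0 < s) (ha : 1 < a) :
    ∫ x in Ioi 0, log (x + a) ^ (-(1 + s)) / (x + a) = log a ^ (-s) / s := by
  rw [integral_Ioi_of_hasDerivAt_of_nonneg'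
    (fun x hx => hasDerivAt_neg_log_add_rpow_div hs.ne' (by linarith [mem_Ici.1 hx]))
    (fun x hx => log_add_rpow_div_nonneg (by linarith [mem_Ioi.1 hx]))
    (tendsto_neg_log_add_rpow_div_atTop hs)]
  simp [neg_div]

lemma integral_test_log_add_rpow_div (hs : 0 < s) (ha : 1 < a) :
    log a ^ (-s) / s ≤ ∑' m : ℕ, log (m + a) ^ (-(1 + s)) / (m + a) ∧
      ∑' m : ℕ, log (m + a) ^ (-(1 + s)) / (m + a) ≤
        log a ^ (-(1 + s)) / a + log a ^ (-s) / s := by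
  have anti := antitoneOn_log_add_rpow_div hs.le ha
  have integrable := integrableOn_log_add_rpow_div hs ha
  have nonneg : ∀ x ∈ Ioi (0 : ℝ), 0 ≤ log (x + a) ^ (-(1 + s)) / (x + a) :=
    fun x hx => log_add_rpow_div_nonneg (by linarith [mem_Ioi.1 hx])
  have lower := anti.integral_le_tsum (anti.summable_of_integrableOn_Ioi_zero integrable nonneg)
    nonneg
  have upper := anti.tsum_le_integral integrable nonneg
  rw [integral_log_add_rpow_div hs ha] at lower upper
  simpa using And.intro lower upper

theorem tendsto_mul_tsum_log_add_rpow_div (ha : 1 < a) :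
    Tendsto (fun s => s * ∑' m : ℕ, log (m + a) ^ (-(1 + s)) / (m + a)) (𝓝[>] 0) (𝓝 1) := by
  have hlog : log a ≠ 0 := (log_pos ha).ne'
  have lower : Tendsto (fun s : ℝ => log a ^ (-s)) (𝓝[>] 0) (𝓝 1) := by
    have h : ContinuousAt (fun s : ℝ => log a ^ (-s)) 0 :=
      (continuousAt_const_rpow hlog).comp continuousAt_neg
    simpa using h.tendsto.mono_left nhdsWithin_le_nhds
  have upper : Tendsto (fun s : ℝ => s * (log a ^ (-(1 + s)) / a) + log a ^ (-s)) (𝓝[>] 0)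
      (𝓝 1) := by
    have h : ContinuousAt (fun s : ℝ => s * (log a ^ (-(1 + s)) / a)) 0 :=
      continuousAt_id.mul (((continuousAt_const_rpow hlog).comp (by fun_prop)).div_const a)
    simpa using (h.tendsto.mono_left nhdsWithin_le_nhds).add lower
  refine tendsto_of_tendsto_of_tendsto_of_le_of_le' lower upper ?_ ?_ <;>
    filter_upwards [self_mem_nhdsWithin] with s (hs : 0 < s)
  · have h := mul_le_mul_of_nonneg_left (integral_test_log_add_rpow_div hs ha).1 hs.le
    rwa [mul_div_cancel₀ _ hs.ne'] at h
  · have h := mul_le_mul_of_nonneg_left (integral_test_log_add_rpow_div hs ha).2 hs.le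
    rwa [mul_add, mul_div_cancel₀ _ hs.ne'] at h

end LogRpowSum

theorem eps_sum_tendsto_general (α : ℝ) (hα0 : 0 < α) :
    Filter.Tendsto
      (fun ε : ℝ => ε * ∑' m : ℕ, Real.log ((m : ℝ) + 2) ^ (-(1 + α * ε)) / ((m : ℝ) + 2))
      (𝓝[>] 0) (𝓝 (1 / α)) := by
  have hscale : Tendsto (α * ·) (𝓝[>] (0 : ℝ)) (𝓝[>] 0) :=
    tendsto_iff_comap.2 (comap_mulLeft_nhdsGT_zero hα0).ge
  have h := ((tendsto_mul_tsum_log_add_rpow_div one_lt_two).comp hscale).const_mul α⁻¹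
  rw [mul_one, ← one_div] at h
  refine h.congr fun ε => ?_
  simp only [Function.comp_apply]
  field_simp

/-- For `0 < α ≤ 1`, `ε ∑_{m≥2} (log m)^{-1-αε} / m → 1/α` as `ε → 0⁺`. -/
theorem eps_sum_tendsto (α : ℝ) (hα0 : 0 < α) (hα1 : α ≤ 1) :
    Filter.Tendsto
      (fun ε : ℝ => ε * ∑' m : ℕ, Real.log ((m : ℝ) + 2) ^ (-(1 + α * ε)) / ((m : ℝ) + 2))
      (𝓝[>] 0) (𝓝 (1 / α)) :=
  eps_sum_tendsto_general α hα0
end
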